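/- arXiv:1709.02952 — 2 statements merged into one kernel-verified Lean document; each statement's English description precedes it below -/
import Mathlib

section
/- Let $\{D_1,\dots,D_m\}$ be a partition of $G\setminus\{0\}$ for an abelian group $G$ of order $v$, with $|D_i|=k_i$. Then $\{D_1,\dots,D_m\}$ is a $(v,m;k_1,\dots,k_m;\lambda_1,\dots,\lambda_m)$-GSEDF if and only if each $D_i$ is a $(v,k_i,k_i-\lambda_i-1,k_i-\lambda_i)$-partial difference set in $G$. -/
/-- The number of times `g` occurs in the multiset `Δ(A,B) = {x - y : x ∈ A, y ∈ B}`. -/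
noncomputable def extDiffCount {G : Type*} [AddCommGroup G] (A B : Finset G) (g : G) : ℕ :=
  letI := Classical.decEq G
  ((A ×ˢ B).filter (fun p => p.1 - p.2 = g)).card

/-- `{D i}` is a `(v, m; k₁,…,k_m; λ₁,…,λ_m)`-GSEDF in the finite abelian group `G`. -/
def IsGSEDF {G : Type*} [AddCommGroup G] [Fintype G] (v m : ℕ)
    (D : Fin m → Finset G) (k lam : Fin m → ℕ) : Prop :=
  Fintype.card G = v ∧
  (∀ i, (D i).card = k i) ∧
  (∀ i, 0 < k i) ∧ (∀ i, 0 < lam i) ∧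
  (∀ i j, i ≠ j → Disjoint (D i) (D j)) ∧
  ∀ i, ∀ g : G, g ≠ 0 →
    (∑ j ∈ Finset.univ.filter (· ≠ i), extDiffCount (D i) (D j) g) = lam i

/-!
Fix a block `D i` and `g ≠ 0`. Since the blocks partition `G \ {0}`, each `x ∈ D i` with
`x ≠ g` has `x - g` in exactly one block, so `∑ j, Δ(D i, D j)(g) = |D i \ {g}|`. Splitting off
the term `j = i`, the GSEDF count at `g` is `|D i \ {g}| - Δ(D i, D i)(g)`, and asking it to be
`lam i` for all `g ≠ 0` is exactly the partial difference set condition on `D i`.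
-/

open Finset

theorem extDiffCount_eq_card_filter {G : Type*} [AddCommGroup G] [DecidableEq G]
    (A B : Finset G) (g : G) : extDiffCount A B g = #{x ∈ A | x - g ∈ B} := by
  unfold extDiffCount
  refine card_nbij' Prod.fst (fun x => (x, x - g)) ?_ ?_ ?_ ?_
  · rintro ⟨x, y⟩ h
    simp only [coe_filter, mem_product, Set.mem_ofPred_eq] at h ⊢
    rw [← h.2, sub_sub_cancel]
    exact h.1
  · intro x h
    simp_all
  · rintro ⟨x, y⟩ h
    simp only [coe_filter, mem_product, Set.mem_ofPred_eq] at h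
    simp [← h.2]
  · intro x _
    rfl

section Partition

variable {G ι : Type*} [AddCommGroup G] [Fintype ι] {D : ι → Finset G}

theorem sum_extDiffCount_of_partition [DecidableEq G]
    (hdisj : ∀ i j, i ≠ j → Disjoint (D i) (D j)) (h0 : ∀ i, (0 : G) ∉ D i)
    (hcover : ∀ x : G, x ≠ 0 → ∃ i, x ∈ D i) (A : Finset G) (g : G) :
    ∑ j, extDiffCount A (D j) g = #(A.erase g) := by
  simp only [extDiffCount_eq_card_filter]
  rw [← card_biUnion]
  · congr 1
    ext x
    have hcovered : (∃ j, x - g ∈ D j) ↔ x ≠ g := by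
      constructor
      · rintro ⟨j, hj⟩ rfl
        exact h0 j (sub_self x ▸ hj)
      · exact fun hx => hcover _ (sub_ne_zero.mpr hx)
    simp [hcovered, and_comm]
  · intro i _ j _ hij
    exact disjoint_left.mpr fun x hi hj =>
      disjoint_left.mp (hdisj i j hij) (mem_filter.mp hi).2 (mem_filter.mp hj).2

theorem extDiffCount_self_add_sum_ne_of_partition [DecidableEq G] [DecidableEq ι]
    (hdisj : ∀ i j, i ≠ j → Disjoint (D i) (D j)) (h0 : ∀ i, (0 : G) ∉ D i)
    (hcover : ∀ x : G, x ≠ 0 → ∃ i, x ∈ D i) (i : ι) (g : G) :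
    extDiffCount (D i) (D i) g + ∑ j ∈ univ.filter (· ≠ i), extDiffCount (D i) (D j) g =
      #((D i).erase g) := by
  rw [filter_ne', add_sum_erase _ (fun j => extDiffCount (D i) (D j) g) (mem_univ i),
    sum_extDiffCount_of_partition hdisj h0 hcover]

end Partition

theorem add_one_and_eq_iff_of_add_eq_card_erase {α : Type*} [DecidableEq α] {A : Finset α}
    {a : α} {c s l : ℕ} (h : c + s = #(A.erase a)) :
    ((a ∈ A → c + l + 1 = #A) ∧ (a ∉ A → c + l = #A)) ↔ s = l := by
  by_cases ha : a ∈ A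
  · have := card_erase_add_one ha
    simp only [ha, not_true_eq_false, forall_const, false_imp_iff, and_true]
    omega
  · rw [erase_eq_of_notMem ha] at h
    simp only [ha, false_imp_iff, not_false_eq_true, forall_const, true_and]
    omega

/-- for a partition of `G \\ {0}`, GSEDF iff each `D i` is a
`(v, k i, k i - lam i - 1, k i - lam i)`-partial difference set (stated subtraction-free). -/
theorem gsedf_iff_partialDiffSet {G : Type*} [AddCommGroup G] [Fintype G] (v m : ℕ)
    (D : Fin m → Finset G) (k lam : Fin m → ℕ)
    (hv : Fintype.card G = v)
    (hcard : ∀ i, (D i).card = k i)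
    (hk : ∀ i, 0 < k i) (hlam : ∀ i, 0 < lam i)
    (hdisj : ∀ i j, i ≠ j → Disjoint (D i) (D j))
    (h0 : ∀ i, (0 : G) ∉ D i)
    (hcover : ∀ x : G, x ≠ 0 → ∃ i, x ∈ D i) :
    IsGSEDF v m D k lam ↔
      ∀ i, ∀ g : G, g ≠ 0 →
        (g ∈ D i → extDiffCount (D i) (D i) g + lam i + 1 = k i) ∧
        (g ∉ D i → extDiffCount (D i) (D i) g + lam i = k i) := by
  classical
  rw [IsGSEDF, and_iff_right hv, and_iff_right hcard, and_iff_right hk, and_iff_right hlam,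
    and_iff_right hdisj]
  refine forall_congr' fun i => forall_congr' fun g => forall_congr' fun _ => ?_
  rw [← hcard]
  exact (add_one_and_eq_iff_of_add_eq_card_erase
    (extDiffCount_self_add_sum_ne_of_partition hdisj h0 hcover i g)).symm
end

section
/- If a $(v,2;k_1,k_2;\lambda_1,\lambda_2)$-GSEDF exists then $\lambda_1=\lambda_2$; moreover if $k_1$ and $k_2$ are both prime then $\lambda_1=\lambda_2=1$. -/
theorem Nat.eq_mul_of_dvd_mul_of_lt {p q n : ℕ} (hp : p.Prime) (hq : q.Prime)
    (hn : n ∣ p * q) (hpn : p < n) (hqn : q < n) : n = p * q := by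
  obtain ⟨a, b, ha, hb, rfl⟩ := Nat.dvd_mul.mp hn
  have hb_le : b ≤ q := Nat.le_of_dvd hq.pos hb
  have ha_le : a ≤ p := Nat.le_of_dvd hp.pos ha
  rcases (Nat.dvd_prime hp).mp ha with rfl | rfl
  · omega
  rcases (Nat.dvd_prime hq).mp hb with rfl | rfl
  · omega
  rfl

section extDiffCount

variable {G : Type*} [AddCommGroup G]

theorem extDiffCount_zero_of_disjoint {A B : Finset G} (hAB : Disjoint A B) :
    extDiffCount A B 0 = 0 := by
  classical
  simp only [extDiffCount, Finset.card_eq_zero, Finset.filter_eq_empty_iff, Finset.mem_product,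
    sub_eq_zero, Prod.forall]
  rintro a b ⟨ha, hb⟩ rfl
  exact Finset.disjoint_left.mp hAB ha hb

variable [Fintype G]

theorem sum_extDiffCount (A B : Finset G) :
    ∑ g, extDiffCount A B g = A.card * B.card := by
  classical
  rw [← Finset.card_product]
  exact (Finset.card_eq_sum_card_fiberwise fun _ _ => Finset.mem_univ _).symm

theorem sum_erase_zero_extDiffCount [DecidableEq G] {A B : Finset G} (hAB : Disjoint A B) :
    ∑ g ∈ Finset.univ.erase 0, extDiffCount A B g = A.card * B.card := by
  rw [Finset.sum_erase _ (extDiffCount_zero_of_disjoint hAB), sum_extDiffCount]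

end extDiffCount

namespace IsGSEDF

variable {G : Type*} [AddCommGroup G] [Fintype G] {v m : ℕ} {D : Fin m → Finset G}
  {k lam : Fin m → ℕ}

theorem pred_mul_lam_eq (h : IsGSEDF v m D k lam) (i : Fin m) :
    (v - 1) * lam i = k i * ∑ j ∈ Finset.univ.filter (· ≠ i), k j := by
  classical
  obtain ⟨hv, hcard, -, -, hdisj, hcount⟩ := h
  calc (v - 1) * lam i
      = ∑ g ∈ Finset.univ.erase (0 : G), ∑ j ∈ Finset.univ.filter (· ≠ i),
          extDiffCount (D i) (D j) g := by
        rw [Finset.sum_congr rfl fun g hg => hcount i g (Finset.ne_of_mem_erase hg),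
          Finset.sum_const, Finset.card_erase_of_mem (Finset.mem_univ _), Finset.card_univ, hv,
          smul_eq_mul]
    _ = ∑ j ∈ Finset.univ.filter (· ≠ i), k i * k j := by
        rw [Finset.sum_comm]
        refine Finset.sum_congr rfl fun j hj => ?_
        rw [sum_erase_zero_extDiffCount (hdisj i j (Finset.mem_filter.mp hj).2.symm),
          hcard, hcard]
    _ = k i * ∑ j ∈ Finset.univ.filter (· ≠ i), k j := (Finset.mul_sum _ _ _).symm

theorem sum_le (h : IsGSEDF v m D k lam) : ∑ i, k i ≤ v := by
  classical
  obtain ⟨hv, hcard, -, -, hdisj, -⟩ := h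
  calc ∑ i, k i = (Finset.univ.biUnion D).card := by
        rw [Finset.card_biUnion fun i _ j _ hij => hdisj i j hij]
        exact Finset.sum_congr rfl fun i _ => (hcard i).symm
    _ ≤ v := hv ▸ Finset.card_le_univ _

end IsGSEDF

/-- in a `(v, 2; k₁, k₂; λ₁, λ₂)`-GSEDF we have `λ₁ = λ₂`; and if both
`k₁` and `k₂` are prime then `λ₁ = λ₂ = 1`. -/
theorem gsedf_two_lambda_eq {G : Type*} [AddCommGroup G] [Fintype G] (v : ℕ)
    (D : Fin 2 → Finset G) (k lam : Fin 2 → ℕ)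
    (h : IsGSEDF v 2 D k lam) :
    lam 0 = lam 1 ∧
    ((k 0).Prime → (k 1).Prime → lam 0 = 1 ∧ lam 1 = 1) := by
  have h0 : (v - 1) * lam 0 = k 0 * k 1 := by
    simpa [Finset.sum_filter, Fin.sum_univ_two] using h.pred_mul_lam_eq 0
  have h1 : (v - 1) * lam 1 = k 0 * k 1 := by
    simpa [Finset.sum_filter, Fin.sum_univ_two, mul_comm] using h.pred_mul_lam_eq 1
  have hv : k 0 + k 1 ≤ v := by simpa [Fin.sum_univ_two] using h.sum_le
  have hk0 := h.2.2.1 0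
  have hk1 := h.2.2.1 1
  have hlam : lam 0 = lam 1 := Nat.eq_of_mul_eq_mul_left (by omega) (h0.trans h1.symm)
  refine ⟨hlam, fun hp hq => ?_⟩
  have hp2 := hp.two_le
  have hq2 := hq.two_le
  have hpq : v - 1 = k 0 * k 1 :=
    Nat.eq_mul_of_dvd_mul_of_lt hp hq ⟨lam 0, h0.symm⟩ (by omega) (by omega)
  have hlam0 : lam 0 = 1 :=
    Nat.eq_of_mul_eq_mul_left (by omega) (h0.trans (hpq.symm.trans (mul_one _).symm))
  exact ⟨hlam0, hlam ▸ hlam0⟩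
end
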